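/- arXiv:1203.3079 — 5 statements merged into one kernel-verified Lean document; each statement's English description precedes it below -/
import Mathlib

section
/- Let a : ℕ × ℕ → ℝ satisfy a(n,k) ≥ 0 for all n, k, let ρ > 0, α > 0, c₁ > 0 and u₀ > 1. Assume (i) the double sum Σ_{n,k} a(n,k) ρ^n u₀^k converges, and (ii) there is N such that Σ_k a(n,k) ≥ c₁ n^{−α} ρ^{−n} for all n ≥ N. Then there exists c > 0 such that for every sufficiently small ε > 0 there is n₀(ε) with: for all n ≥ n₀(ε), (Σ_{k > n^ε} a(n,k)) / (Σ_k a(n,k)) ≤ exp(−n^{cε}). -/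
/-!
Chernoff bound: for `k > n ^ ε` one has `a (n, k) ≤ u₀ ^ (k - n ^ ε) * a (n, k)`, so the tail
mass of row `n` is at most `u₀ ^ (-n ^ ε) * ρ ^ (-n) * A(ρ, u₀)`. Dividing by the lower bound
`c₁ * n ^ (-α) * ρ ^ (-n)` for the row total leaves `A(ρ, u₀) / c₁ * n ^ α * u₀ ^ (-n ^ ε)`,
which is eventually below `exp (-n ^ (ε / 2))` because `log n` and `n ^ (ε / 2)` are `o(n ^ ε)`.
-/

open Real Filter Asymptotics

theorem isLittleO_rpow_rpow_atTop_of_lt {p q : ℝ} (hpq : p < q) :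
    (fun x : ℝ => x ^ p) =o[atTop] fun x => x ^ q := by
  refine (isLittleO_iff_tendsto' ?_).2 ?_
  · filter_upwards [eventually_gt_atTop 0] with x hx h
    exact absurd h (rpow_pos_of_pos hx q).ne'
  · refine (tendsto_rpow_neg_atTop (sub_pos.2 hpq)).congr' ?_
    filter_upwards [eventually_gt_atTop 0] with x hx
    rw [← rpow_sub hx, neg_sub]

theorem eventually_add_mul_log_add_rpow_le (L β : ℝ) {δ ε b : ℝ} (hδε : δ < ε) (hε : 0 < ε)
    (hb : 0 < b) : ∀ᶠ x : ℝ in atTop, L + β * log x + x ^ δ ≤ b * x ^ ε := by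
  have hconst : (fun _ : ℝ => L) =o[atTop] fun x => x ^ ε :=
    isLittleO_const_left.2 <| Or.inr <| tendsto_norm_atTop_atTop.comp (tendsto_rpow_atTop hε)
  have hlog := (isLittleO_log_rpow_atTop hε).const_mul_left β
  have hsmall := (hconst.add hlog).add (isLittleO_rpow_rpow_atTop_of_lt hδε)
  filter_upwards [hsmall.def hb, eventually_gt_atTop 0] with x hx hx0
  rw [norm_of_nonneg (rpow_pos_of_pos hx0 ε).le] at hx
  exact (le_abs_self _).trans hx

theorem eventually_mul_rpow_mul_rpow_neg_le_exp {C : ℝ} (hC : 0 < C) (β : ℝ) {u δ ε : ℝ}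
    (hu : 1 < u) (hδε : δ < ε) (hε : 0 < ε) :
    ∀ᶠ n : ℕ in atTop, C * (n : ℝ) ^ β * u ^ (-(n : ℝ) ^ ε) ≤ exp (-(n : ℝ) ^ δ) := by
  filter_upwards [tendsto_natCast_atTop_atTop.eventually
      (eventually_add_mul_log_add_rpow_le (log C) β hδε hε (log_pos hu)),
    eventually_gt_atTop 0] with n hn hn0
  have hn0' : (0 : ℝ) < n := Nat.cast_pos.2 hn0
  rw [rpow_def_of_pos hn0', rpow_def_of_pos (by linarith), ← exp_log hC, ← exp_add, ← exp_add,
    exp_le_exp]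
  linarith

theorem tsum_ite_lt_le_rpow_neg_mul_tsum {f : ℕ → ℝ} (hf : ∀ k, 0 ≤ f k) {u : ℝ} (hu : 1 ≤ u)
    (hfu : Summable fun k => f k * u ^ k) (t : ℝ) :
    ∑' k : ℕ, (if t < (k : ℝ) then f k else 0) ≤ u ^ (-t) * ∑' k, f k * u ^ k := by
  have hu0 : 0 < u := one_pos.trans_le hu
  have hf_le : ∀ k, f k ≤ f k * u ^ k := fun k => le_mul_of_one_le_right (hf k) (one_le_pow₀ hu)
  have htail : Summable fun k : ℕ => if t < (k : ℝ) then f k else 0 :=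
    hfu.of_nonneg_of_le (fun k => by split_ifs <;> simp [hf k])
      (fun k => by split_ifs <;> simp [hf_le k, (hf k).trans (hf_le k)])
  rw [← tsum_mul_left]
  refine htail.tsum_le_tsum (fun k => ?_) (hfu.mul_left _)
  split_ifs with hk
  · have hscale : 1 ≤ u ^ (-t) * u ^ k := by
      rw [← rpow_natCast, ← rpow_add hu0]
      exact one_le_rpow hu (by linarith)
    calc f k ≤ f k * (u ^ (-t) * u ^ k) := le_mul_of_one_le_right (hf k) hscale
      _ = u ^ (-t) * (f k * u ^ k) := by ring
  · exact mul_nonneg (rpow_nonneg hu0.le _) ((hf k).trans (hf_le k))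

section WeightedArray

variable {a : ℕ × ℕ → ℝ} {ρ u : ℝ}

theorem summable_row_mul_pow (hρ : 0 < ρ)
    (hsum : Summable fun p : ℕ × ℕ => a p * ρ ^ p.1 * u ^ p.2) (n : ℕ) :
    Summable fun k => a (n, k) * u ^ k := by
  have hrow := hsum.comp_injective (Prod.mk_right_injective (a := n))
  refine (summable_mul_left_iff (pow_ne_zero n hρ.ne')).1 (hrow.congr fun k => ?_)
  simp only [Function.comp_apply]
  ring

theorem pow_mul_tsum_row_le (ha : ∀ p, 0 ≤ a p) (hρ : 0 ≤ ρ) (hu : 0 ≤ u)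
    (hsum : Summable fun p : ℕ × ℕ => a p * ρ ^ p.1 * u ^ p.2) (n : ℕ) :
    ρ ^ n * ∑' k, a (n, k) * u ^ k ≤ ∑' p : ℕ × ℕ, a p * ρ ^ p.1 * u ^ p.2 := by
  rw [← tsum_mul_left]
  refine le_of_eq_of_le (tsum_congr fun k => ?_) (tsum_comp_le_tsum_of_inj hsum
    (fun p => by have := ha p; positivity) (Prod.mk_right_injective (a := n)))
  simp only [Function.comp_apply]
  ring

theorem tsum_tail_div_tsum_row_le (ha : ∀ p, 0 ≤ a p) (hρ : 0 < ρ) (hu : 1 ≤ u)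
    (hsum : Summable fun p : ℕ × ℕ => a p * ρ ^ p.1 * u ^ p.2) {α c₁ : ℝ} (hc₁ : 0 < c₁)
    {n : ℕ} (hn : 0 < n) (hlow : c₁ * (n : ℝ) ^ (-α) * ρ ^ (-(n : ℝ)) ≤ ∑' k, a (n, k)) (t : ℝ) :
    (∑' k : ℕ, if t < (k : ℝ) then a (n, k) else 0) / ∑' k, a (n, k) ≤
      (∑' p : ℕ × ℕ, a p * ρ ^ p.1 * u ^ p.2) / c₁ * (n : ℝ) ^ α * u ^ (-t) := by
  set T := ∑' p : ℕ × ℕ, a p * ρ ^ p.1 * u ^ p.2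
  have hn' : (0 : ℝ) < n := Nat.cast_pos.2 hn
  have hρn : 0 < ρ ^ n := pow_pos hρ n
  have htail := tsum_ite_lt_le_rpow_neg_mul_tsum (fun k => ha (n, k)) hu
    (summable_row_mul_pow hρ hsum n) t
  have hrow : ∑' k, a (n, k) * u ^ k ≤ T / ρ ^ n := by
    rw [le_div_iff₀ hρn, mul_comm]
    exact pow_mul_tsum_row_le ha hρ.le (by linarith) hsum n
  have htail0 : 0 ≤ ∑' k : ℕ, if t < (k : ℝ) then a (n, k) else 0 :=
    tsum_nonneg fun k => by split_ifs <;> simp [ha (n, k)]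
  calc _ ≤ (∑' k : ℕ, if t < (k : ℝ) then a (n, k) else 0) /
          (c₁ * (n : ℝ) ^ (-α) * ρ ^ (-(n : ℝ))) :=
        div_le_div_of_nonneg_left htail0 (by positivity) hlow
    _ = (∑' k : ℕ, if t < (k : ℝ) then a (n, k) else 0) * ((n : ℝ) ^ α * ρ ^ n) / c₁ := by
        rw [rpow_neg hn'.le, rpow_neg hρ.le, rpow_natCast]
        field_simp
    _ ≤ u ^ (-t) * (T / ρ ^ n) * ((n : ℝ) ^ α * ρ ^ n) / c₁ := by
        gcongr
        exact htail.trans (by gcongr)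
    _ = T / c₁ * (n : ℝ) ^ α * u ^ (-t) := by
        field_simp

end WeightedArray

theorem tail_exponential_rate_general
    (a : ℕ × ℕ → ℝ) (ha : ∀ p, 0 ≤ a p)
    (ρ α c₁ u₀ : ℝ) (hρ : 0 < ρ) (hc₁ : 0 < c₁) (hu₀ : 1 < u₀)
    (hsum : Summable (fun p : ℕ × ℕ => a p * ρ ^ p.1 * u₀ ^ p.2))
    (N : ℕ)
    (hlow : ∀ n : ℕ, N ≤ n → c₁ * (n : ℝ) ^ (-α) * ρ ^ (-(n : ℝ)) ≤ ∑' k, a (n, k)) :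
    ∃ c > (0 : ℝ), ∃ ε₀ > (0 : ℝ), ∀ ε : ℝ, 0 < ε → ε < ε₀ →
      ∃ n₀ : ℕ, ∀ n : ℕ, n₀ ≤ n →
        (∑' k : ℕ, if (n : ℝ) ^ ε < (k : ℝ) then a (n, k) else 0) / (∑' k : ℕ, a (n, k))
          ≤ Real.exp (-(n : ℝ) ^ (c * ε)) := by
  refine ⟨1 / 2, by norm_num, 1, one_pos, fun ε hε _ => ?_⟩
  set T := ∑' p : ℕ × ℕ, a p * ρ ^ p.1 * u₀ ^ p.2
  obtain ⟨n₀, hn₀⟩ := eventually_atTop.1 <|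
    (eventually_mul_rpow_mul_rpow_neg_le_exp (C := max T 1 / c₁) (by positivity) α hu₀
      (by linarith : 1 / 2 * ε < ε) hε).and (eventually_ge_atTop (max N 1))
  refine ⟨n₀, fun n hn => ?_⟩
  obtain ⟨hexp, hnN⟩ := hn₀ n hn
  calc _ ≤ T / c₁ * (n : ℝ) ^ α * u₀ ^ (-(n : ℝ) ^ ε) :=
        tsum_tail_div_tsum_row_le ha hρ hu₀.le hsum hc₁ (by omega) (hlow n (by omega)) _
    _ ≤ max T 1 / c₁ * (n : ℝ) ^ α * u₀ ^ (-(n : ℝ) ^ ε) := by gcongr; exact le_max_left T 1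
    _ ≤ _ := hexp

/-- Lemma 2.1 of the paper (exponential-tail criterion), stated for the
coefficient array `a (n, k)` of the bivariate generating function
`A(z,u) = ∑ a(n,k) zⁿ uᵏ` of a weighted combinatorial class:
if `A(ρ, u₀)` converges for some `u₀ > 1` and the size-`n` coefficients of
`A(z,1)` are `Ω(n^{-α} ρ^{-n})`, then the probability under the weighted
distribution in size `n` that the parameter exceeds `n^ε` is at most
`exp(-n^{cε})` for large `n`. -/
theorem tail_exponential_rate
    (a : ℕ × ℕ → ℝ) (ha : ∀ p, 0 ≤ a p)
    (ρ α c₁ u₀ : ℝ) (hρ : 0 < ρ) (hα : 0 < α) (hc₁ : 0 < c₁) (hu₀ : 1 < u₀)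
    (hsum : Summable (fun p : ℕ × ℕ => a p * ρ ^ p.1 * u₀ ^ p.2))
    (N : ℕ)
    (hlow : ∀ n : ℕ, N ≤ n → c₁ * (n : ℝ) ^ (-α) * ρ ^ (-(n : ℝ)) ≤ ∑' k, a (n, k)) :
    ∃ c > (0 : ℝ), ∃ ε₀ > (0 : ℝ), ∀ ε : ℝ, 0 < ε → ε < ε₀ →
      ∃ n₀ : ℕ, ∀ n : ℕ, n₀ ≤ n →
        (∑' k : ℕ, if (n : ℝ) ^ ε < (k : ℝ) then a (n, k) else 0) / (∑' k : ℕ, a (n, k))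
          ≤ Real.exp (-(n : ℝ) ^ (c * ε)) :=
  tail_exponential_rate_general a ha ρ α c₁ u₀ hρ hc₁ hu₀ hsum N hlow
end

section
/- Fix x > 0. Let T : [0, 1/4] → ℝ be the Catalan generating function, i.e. the unique continuous function with T(0) = 1 satisfying T(w) = 1/(1 − w·T(w)) for all w ∈ [0, 1/4] (explicitly T(w) = (1 − √(1 − 4w))/(2w) for w ≠ 0). Let f(z) = Σ_{n≥1} f_n z^n and g(z) = Σ_{n≥1} g_n z^n be power series with nonnegative coefficients and zero constant term, let ρ ∈ (0, ∞) be the radius of convergence of f, and suppose that for every z ∈ (0, ρ): f(z) < 1/2, g(z) < 1/2, z/(1 − 2f(z))² ≤ 1/4, x·z/(1 − 2g(z))² ≤ 1/4, and the system f(z) = (x·z/(1 − 2g(z))) · T( x·z/(1 − 2g(z))² ) and g(z) = (z/(1 − 2f(z))) · T( z/(1 − 2f(z))² ) holds. Then, setting τ = lim_{z → ρ⁻} f(z) and σ = lim_{z → ρ⁻} g(z) (these limits exist by monotonicity), one has: τ < 1/2, σ < 1/2, ρ/(1 − 2τ)² < 1/4, and x·ρ/(1 − 2σ)² < 1/4.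 -/
/-!
Since `T(w) = 1/(1 - wT(w))` means `wT² = T - 1`, on `(0, ρ)` the system is the polynomial
system `f = xz + 2fg + f²`, `g = z + 2fg + g²`, and the monotone limits `τ, σ` satisfy it at
`z = ρ`. There `(1 - 2τ)²/4 - ρ = (1 - 2σ)²/4 - xρ = (1/2 - τ - σ)²`, so the four inequalities
come down to `τ + σ ≠ 1/2`.

If `τ + σ = 1/2`, then `ρ = σ²` and `xρ = τ²`; there the Jacobian of the polynomial system is
invertible, and concretely an intermediate value argument yields a nonnegative solution `(a, b)`
at some `z > ρ`. By the identity theorem the coefficients of `f` and `g` obey the recursion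
encoded by the system, so their partial sums at `z` stay below `a` and `b`, and the series of `f`
converges beyond its radius of convergence.
-/

open Real Filter Topology PowerSeries
open Finset.HasAntidiagonal (antidiagonal mem_antidiagonal)

lemma mul_sq_eq_sub_one_of_eq_one_div {w t : ℝ} (h : t = 1 / (1 - w * t)) :
    w * t ^ 2 = t - 1 := by
  -- `1 / 0 = 0`, so `1 - w * t = 0` would force `t = 0`
  have hne : 1 - w * t ≠ 0 := by
    intro h0
    rw [h0, div_zero] at h
    rw [h, mul_zero, sub_zero] at h0
    exact one_ne_zero h0
  rw [eq_div_iff hne] at h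
  linear_combination -h

lemma eq_add_mul_add_sq_of_eq_mul_catalan {T : ℝ → ℝ}
    (hT : ∀ w ∈ Set.Icc (0 : ℝ) (1 / 4), T w = 1 / (1 - w * T w)) {a b y : ℝ} (hy : 0 ≤ y)
    (ha : a < 1 / 2) (hw : y / (1 - 2 * a) ^ 2 ≤ 1 / 4)
    (hb : b = y / (1 - 2 * a) * T (y / (1 - 2 * a) ^ 2)) :
    b = y + 2 * a * b + b ^ 2 := by
  have hq := mul_sq_eq_sub_one_of_eq_one_div (hT _ ⟨by positivity, hw⟩)
  have ha' : 1 - 2 * a ≠ 0 := by linarith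
  rw [hb]
  field_simp at hq ⊢
  linear_combination (-y) * hq

namespace PowerSeries

lemma coeff_mul_mul_pow (F G : ℝ⟦X⟧) (z : ℝ) (n : ℕ) :
    coeff n (F * G) * z ^ n =
      ∑ p ∈ antidiagonal n, coeff p.1 F * z ^ p.1 * (coeff p.2 G * z ^ p.2) := by
  rw [coeff_mul, Finset.sum_mul]
  refine Finset.sum_congr rfl fun p hp => ?_
  rw [← mem_antidiagonal.1 hp, pow_add]
  ring

/-- Summability in `ℝ` is absolute, so by the Cauchy product this is a subring. -/
def convergentAt (z : ℝ) : Subring ℝ⟦X⟧ where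
  carrier := {F | Summable fun n => coeff n F * z ^ n}
  mul_mem' {F G} (hF : Summable fun n => coeff n F * z ^ n)
      (hG : Summable fun n => coeff n G * z ^ n) :=
    (summable_norm_sum_mul_antidiagonal_of_summable_norm hF.norm hG.norm).of_norm.congr fun n =>
      (coeff_mul_mul_pow F G z n).symm
  one_mem' := summable_of_ne_finset_zero (s := {0}) fun n hn => by
    simp [coeff_one, Finset.mem_singleton.not.1 hn]
  add_mem' {F G} hF hG := by simpa only [Set.mem_ofPred_eq, map_add, add_mul] using hF.add hG
  zero_mem' := by simp
  neg_mem' {F} hF := by simpa using hF.neg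

@[simp]
lemma mem_convergentAt {F : ℝ⟦X⟧} {z : ℝ} :
    F ∈ convergentAt z ↔ Summable fun n => coeff n F * z ^ n := Iff.rfl

noncomputable def evalAt (z : ℝ) : convergentAt z →+* ℝ where
  toFun F := ∑' n, coeff n (F : ℝ⟦X⟧) * z ^ n
  map_one' := by
    rw [tsum_eq_single 0 fun n hn => by simp [coeff_one, hn]]
    simp
  map_mul' F G := by
    simp only [Subring.coe_mul, coeff_mul_mul_pow]
    exact (tsum_mul_tsum_eq_tsum_sum_antidiagonal_of_summable_norm
      F.2.norm G.2.norm).symm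
  map_zero' := by simp
  map_add' F G := by
    simp only [Subring.coe_add, map_add, add_mul]
    exact F.2.tsum_add G.2

lemma evalAt_apply (z : ℝ) (F : convergentAt z) :
    evalAt z F = ∑' n, coeff n (F : ℝ⟦X⟧) * z ^ n := rfl

lemma coe_polynomial_mem_convergentAt (p : Polynomial ℝ) (z : ℝ) : (p : ℝ⟦X⟧) ∈ convergentAt z :=
  summable_of_ne_finset_zero (s := p.support) fun n hn => by
    simp [Polynomial.notMem_support_iff.1 hn]

lemma evalAt_coe_polynomial (p : Polynomial ℝ) (z : ℝ) :
    evalAt z ⟨p, coe_polynomial_mem_convergentAt p z⟩ = p.eval z := by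
  rw [evalAt_apply, tsum_eq_sum (s := p.support) fun n hn => by
    simp [Polynomial.notMem_support_iff.1 hn], Polynomial.eval_eq_sum]
  simp [Polynomial.sum_def]

lemma hasFPowerSeriesAt_tsum {F : ℝ⟦X⟧} {r : ℝ} (hr : 0 < r) (hF : F ∈ convergentAt r) :
    HasFPowerSeriesAt (fun z => ∑' n, coeff n F * z ^ n)
      (FormalMultilinearSeries.ofScalars ℝ fun n => coeff n F) 0 := by
  set p := FormalMultilinearSeries.ofScalars ℝ fun n => coeff n F
  have hrad : (r.toNNReal : ENNReal) ≤ p.radius := by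
    refine p.le_radius_of_summable ?_
    simpa [p, FormalMultilinearSeries.ofScalars_norm, norm_mul, abs_of_pos hr,
      Real.coe_toNNReal _ hr.le] using hF.norm
  convert (p.hasFPowerSeriesOnBall
    ((ENNReal.coe_pos.2 (Real.toNNReal_pos.2 hr)).trans_le hrad)).hasFPowerSeriesAt using 1
  funext z
  simp [p, FormalMultilinearSeries.sum, mul_comm]

theorem eq_of_tsum_eq_on_Ioo {F G : ℝ⟦X⟧} {r : ℝ} (hr : 0 < r) (hF : F ∈ convergentAt r)
    (hG : G ∈ convergentAt r)
    (h : ∀ z ∈ Set.Ioo 0 r, ∑' n, coeff n F * z ^ n = ∑' n, coeff n G * z ^ n) : F = G := by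
  have hFp := hasFPowerSeriesAt_tsum hr hF
  have hGp := hasFPowerSeriesAt_tsum hr hG
  have hfreq : ∃ᶠ z in 𝓝[≠] 0, ∑' n, coeff n F * z ^ n = ∑' n, coeff n G * z ^ n :=
    ((eventually_of_mem (Ioo_mem_nhdsGT hr) h).frequently).filter_mono (nhdsGT_le_nhdsNE 0)
  have hser := hFp.eq_formalMultilinearSeries_of_eventually hGp
    ((hFp.analyticAt.frequently_eq_iff_eventually_eq hGp.analyticAt).1 hfreq)
  ext n
  exact congrFun (FormalMultilinearSeries.ofScalars_series_injective ℝ ℝ hser) n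

lemma hasSum_coeff_C_mul_X_add {F G : ℝ⟦X⟧} {z : ℝ} (c : ℝ) (hF : F ∈ convergentAt z)
    (hG : G ∈ convergentAt z) :
    HasSum (fun n => coeff n (C c * X + 2 * F * G + F ^ 2) * z ^ n)
      (c * z + 2 * (∑' n, coeff n F * z ^ n) * (∑' n, coeff n G * z ^ n) +
        (∑' n, coeff n F * z ^ n) ^ 2) := by
  set P : convergentAt z := ⟨_, coe_polynomial_mem_convergentAt (Polynomial.C c * Polynomial.X) z⟩
  have hcoe : ((P + 2 * ⟨F, hF⟩ * ⟨G, hG⟩ + ⟨F, hF⟩ ^ 2 : convergentAt z) : ℝ⟦X⟧) =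
      C c * X + 2 * F * G + F ^ 2 := by
    have h2 : ((2 : convergentAt z) : ℝ⟦X⟧) = 2 := rfl
    simp [P, h2]
  convert (mem_convergentAt.1 (hcoe ▸ Subtype.prop _)).hasSum using 1
  rw [← hcoe, ← evalAt_apply, map_add, map_add, map_mul, map_mul, map_pow, map_ofNat,
    evalAt_coe_polynomial]
  simp [evalAt_apply]

theorem eq_C_mul_X_add_of_tsum_eq {F G : ℝ⟦X⟧} {c ρ : ℝ} (hρ : 0 < ρ)
    (hF : ∀ z ∈ Set.Ioo 0 ρ, F ∈ convergentAt z) (hG : ∀ z ∈ Set.Ioo 0 ρ, G ∈ convergentAt z)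
    (h : ∀ z ∈ Set.Ioo 0 ρ, ∑' n, coeff n F * z ^ n =
      c * z + 2 * (∑' n, coeff n F * z ^ n) * (∑' n, coeff n G * z ^ n) +
        (∑' n, coeff n F * z ^ n) ^ 2) :
    F = C c * X + 2 * F * G + F ^ 2 := by
  have hr : ρ / 2 ∈ Set.Ioo 0 ρ := ⟨half_pos hρ, half_lt_self hρ⟩
  refine eq_of_tsum_eq_on_Ioo (half_pos hρ) (hF _ hr)
    (hasSum_coeff_C_mul_X_add c (hF _ hr) (hG _ hr)).summable fun z hz => ?_
  have hz' : z ∈ Set.Ioo 0 ρ := ⟨hz.1, hz.2.trans hr.2⟩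
  rw [(hasSum_coeff_C_mul_X_add c (hF z hz') (hG z hz')).tsum_eq]
  exact h z hz'

section Majorant

open Finset hiding antidiagonal mem_antidiagonal

variable {F G : ℝ⟦X⟧} {z : ℝ}

lemma sum_range_succ_coeff_mul_le (hF : ∀ n, 0 ≤ coeff n F) (hG : ∀ n, 0 ≤ coeff n G)
    (hF0 : coeff 0 F = 0) (hG0 : coeff 0 G = 0) (hz : 0 ≤ z) (N : ℕ) :
    ∑ n ∈ range (N + 1), coeff n (F * G) * z ^ n ≤
      (∑ n ∈ range N, coeff n F * z ^ n) * ∑ n ∈ range N, coeff n G * z ^ n := by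
  set w : ℕ × ℕ → ℝ := fun p => coeff p.1 F * z ^ p.1 * (coeff p.2 G * z ^ p.2)
  have hw : ∀ p, 0 ≤ w p := fun p => by
    have := hF p.1; have := hG p.2; positivity
  rw [sum_mul_sum, ← sum_product']
  simp_rw [coeff_mul_mul_pow]
  -- a pair with `i + j ≤ N` outside `range N ×ˢ range N` has `i = 0` or `j = 0`
  calc ∑ n ∈ range (N + 1), ∑ p ∈ antidiagonal n, w p
      = ∑ n ∈ range (N + 1), ∑ p ∈ range N ×ˢ range N with p.1 + p.2 = n, w p := by
        refine sum_congr rfl fun n hn => (sum_subset (fun p hp => ?_) fun p hp hpN => ?_).symm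
        · simpa using (mem_filter.1 hp).2
        · rw [mem_range] at hn
          rw [mem_antidiagonal] at hp
          simp only [mem_filter, mem_product, mem_range, hp, and_true] at hpN
          rcases (by omega : p.1 = 0 ∨ p.2 = 0) with h | h
          · simp [w, h, hF0]
          · simp [w, h, hG0]
    _ ≤ ∑ p ∈ range N ×ˢ range N, w p :=
        sum_fiberwise_le_sum_of_sum_fiber_nonneg fun _ _ => sum_nonneg fun p _ => hw p

lemma sum_range_succ_le_of_eq_C_mul_X_add {c a b : ℝ} (hF : ∀ n, 0 ≤ coeff n F)
    (hG : ∀ n, 0 ≤ coeff n G) (hF0 : coeff 0 F = 0) (hG0 : coeff 0 G = 0) (hc : 0 ≤ c)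
    (hz : 0 ≤ z) (hsys : F = C c * X + 2 * F * G + F ^ 2) {N : ℕ}
    (ha : ∑ n ∈ range N, coeff n F * z ^ n ≤ a) (hb : ∑ n ∈ range N, coeff n G * z ^ n ≤ b) :
    ∑ n ∈ range (N + 1), coeff n F * z ^ n ≤ c * z + 2 * a * b + a ^ 2 := by
  have hA : 0 ≤ ∑ n ∈ range N, coeff n F * z ^ n :=
    sum_nonneg fun n _ => mul_nonneg (hF n) (pow_nonneg hz n)
  have hB : 0 ≤ ∑ n ∈ range N, coeff n G * z ^ n :=
    sum_nonneg fun n _ => mul_nonneg (hG n) (pow_nonneg hz n)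
  have hX : ∑ n ∈ range (N + 1), coeff n (C c * X) * z ^ n ≤ c * z := by
    simp only [coeff_C_mul, coeff_X, mul_ite, mul_one, mul_zero, ite_mul, zero_mul,
      sum_ite_eq', mem_range, pow_one]
    split_ifs
    · exact le_rfl
    · exact mul_nonneg hc hz
  have hexp : ∑ n ∈ range (N + 1), coeff n F * z ^ n =
      ∑ n ∈ range (N + 1), coeff n (C c * X) * z ^ n +
        2 * ∑ n ∈ range (N + 1), coeff n (F * G) * z ^ n +
          ∑ n ∈ range (N + 1), coeff n (F * F) * z ^ n := by
    conv_lhs => rw [hsys]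
    simp only [mul_assoc, ← map_ofNat C 2, pow_two, map_add, coeff_C_mul, add_mul,
      sum_add_distrib, mul_sum]
  calc _ ≤ c * z + 2 * ((∑ n ∈ range N, coeff n F * z ^ n) * ∑ n ∈ range N, coeff n G * z ^ n) +
        (∑ n ∈ range N, coeff n F * z ^ n) * ∑ n ∈ range N, coeff n F * z ^ n := by
        rw [hexp]
        gcongr
        · exact sum_range_succ_coeff_mul_le hF hG hF0 hG0 hz N
        · exact sum_range_succ_coeff_mul_le hF hF hF0 hF0 hz N
    _ ≤ c * z + 2 * (a * b) + a * a := by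
        have := hA.trans ha
        gcongr
    _ = c * z + 2 * a * b + a ^ 2 := by ring

theorem summable_of_nonneg_solution {c d a b : ℝ} (hF : ∀ n, 0 ≤ coeff n F)
    (hG : ∀ n, 0 ≤ coeff n G) (hF0 : coeff 0 F = 0) (hG0 : coeff 0 G = 0) (hc : 0 ≤ c)
    (hd : 0 ≤ d) (hz : 0 ≤ z) (hFsys : F = C c * X + 2 * F * G + F ^ 2)
    (hGsys : G = C d * X + 2 * G * F + G ^ 2) (ha : 0 ≤ a) (hb : 0 ≤ b)
    (hae : a = c * z + 2 * a * b + a ^ 2) (hbe : b = d * z + 2 * a * b + b ^ 2) :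
    Summable fun n => coeff n F * z ^ n := by
  have hpartial : ∀ N,
      ∑ n ∈ range N, coeff n F * z ^ n ≤ a ∧ ∑ n ∈ range N, coeff n G * z ^ n ≤ b := by
    intro N
    induction N with
    | zero => simpa using ⟨ha, hb⟩
    | succ N ih =>
      refine ⟨hae ▸ sum_range_succ_le_of_eq_C_mul_X_add hF hG hF0 hG0 hc hz hFsys ih.1 ih.2, ?_⟩
      linarith [sum_range_succ_le_of_eq_C_mul_X_add hG hF hG0 hF0 hd hz hGsys ih.2 ih.1]
  exact summable_of_sum_range_le (fun n => mul_nonneg (hF n) (pow_nonneg hz n)) fun N => (hpartial N).1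

end Majorant

end PowerSeries

lemma monotoneOn_tsum_mul_pow {c : ℕ → ℝ} (hc : ∀ n, 0 ≤ c n) {s : Set ℝ} (hs0 : s ⊆ Set.Ici 0)
    (hs : ∀ z ∈ s, Summable fun n => c n * z ^ n) :
    MonotoneOn (fun z => ∑' n, c n * z ^ n) s := fun z₁ h₁ z₂ h₂ h =>
  Summable.tsum_le_tsum (fun n => mul_le_mul_of_nonneg_left (pow_le_pow_left₀ (hs0 h₁) h n) (hc n))
    (hs z₁ h₁) (hs z₂ h₂)

lemma exists_tendsto_nhdsLT_of_monotoneOn {f : ℝ → ℝ} {a ρ m M : ℝ} (haρ : a < ρ)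
    (hf : MonotoneOn f (Set.Ioo a ρ)) (hm : ∀ z ∈ Set.Ioo a ρ, m ≤ f z)
    (hM : ∀ z ∈ Set.Ioo a ρ, f z ≤ M) : ∃ τ ∈ Set.Icc m M, Tendsto f (𝓝[<] ρ) (𝓝 τ) := by
  have hlim := hf.tendsto_nhdsWithin_Ioo_left (Set.nonempty_Ioo.2 haρ)
    ⟨M, Set.forall_mem_image.2 hM⟩
  have hev : ∀ᶠ z in 𝓝[<] ρ, z ∈ Set.Ioo a ρ := Ioo_mem_nhdsLT haρ
  exact ⟨_, ⟨ge_of_tendsto hlim (hev.mono hm), le_of_tendsto hlim (hev.mono hM)⟩, hlim⟩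

lemma exists_nonneg_solution_of_sqrt_add_sqrt_eq {x z s : ℝ} (hx : 0 ≤ x) (hz : 0 ≤ z)
    (h : √(z + s ^ 2) + √(x * z + s ^ 2) = 1 / 2 + s) :
    ∃ a b : ℝ, 0 ≤ a ∧ 0 ≤ b ∧ a = x * z + 2 * a * b + a ^ 2 ∧ b = z + 2 * a * b + b ^ 2 := by
  set A := √(x * z + s ^ 2)
  set B := √(z + s ^ 2)
  have hA2 : A ^ 2 = x * z + s ^ 2 := sq_sqrt (by positivity)
  have hB2 : B ^ 2 = z + s ^ 2 := sq_sqrt (by positivity)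
  have hAs : s ≤ A := Real.le_sqrt_of_sq_le (le_add_of_nonneg_left (by positivity))
  have hBs : s ≤ B := Real.le_sqrt_of_sq_le (le_add_of_nonneg_left hz)
  -- `a = A - s` and `1 - a - 2b = A + s`, so `a (1 - a - 2b) = A² - s² = xz`
  refine ⟨1 / 2 - B, 1 / 2 - A, by linarith, by linarith, ?_, ?_⟩
  · linear_combination hA2 - (2 * s + (A + B - 1 / 2 - s)) * h
  · linear_combination hB2 - (2 * s + (A + B - 1 / 2 - s)) * h

lemma exists_nonneg_solution_of_add_eq_half {x ρ τ σ : ℝ} (hx : 0 ≤ x) (hτ : 0 < τ)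
    (hσ : 0 < σ) (hsum : τ + σ = 1 / 2) (hρ : ρ = σ ^ 2) (hxρ : x * ρ = τ ^ 2) :
    ∃ z > ρ, ∃ a b : ℝ, 0 ≤ a ∧ 0 ≤ b ∧
      a = x * z + 2 * a * b + a ^ 2 ∧ b = z + 2 * a * b + b ^ 2 := by
  -- For `s = 0` the equation `ψ z = 1/2 + s` holds at `z = ρ`; for `s = 2στ` the left side is
  -- smaller at `ρ`, so the root moves beyond `ρ`.
  set s := 2 * σ * τ
  set ψ : ℝ → ℝ := fun z => √(z + s ^ 2) + √(x * z + s ^ 2)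
  have hψρ : ψ ρ < 1 / 2 + s := by
    have h₁ : √(ρ + s ^ 2) ≤ σ + 2 * σ * τ ^ 2 :=
      (sqrt_le_left (by positivity)).2 (by rw [hρ]; nlinarith [sq_nonneg (σ * τ ^ 2)])
    have h₂ : √(x * ρ + s ^ 2) ≤ τ + 2 * σ ^ 2 * τ :=
      (sqrt_le_left (by positivity)).2 (by rw [hxρ]; nlinarith [sq_nonneg (σ ^ 2 * τ)])
    have : σ * τ * (σ + τ) < σ * τ := by rw [add_comm, hsum]; nlinarith [mul_pos hσ hτ]
    show _ + _ < _
    linarith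
  have hψ₁ : 1 / 2 + s ≤ ψ ((1 / 2 + s) ^ 2) := by
    have : 1 / 2 + s ≤ √((1 / 2 + s) ^ 2 + s ^ 2) :=
      Real.le_sqrt_of_sq_le (by nlinarith)
    exact this.trans (le_add_of_nonneg_right (sqrt_nonneg _))
  have hρ₁ : ρ ≤ (1 / 2 + s) ^ 2 := by rw [hρ]; nlinarith [mul_pos hσ hτ]
  have hψc : ContinuousOn ψ (Set.Icc ρ ((1 / 2 + s) ^ 2)) := by fun_prop
  obtain ⟨z, hz, hψz⟩ := intermediate_value_Icc hρ₁ hψc ⟨hψρ.le, hψ₁⟩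
  have hzρ : ρ < z := lt_of_le_of_ne hz.1 (by rintro rfl; exact hψρ.ne hψz)
  exact ⟨z, hzρ, exists_nonneg_solution_of_sqrt_add_sqrt_eq hx
    ((sq_nonneg σ).trans_eq hρ.symm |>.trans hz.1) hψz⟩

lemma eq_system_of_tendsto {f g : ℝ → ℝ} {x ρ τ σ : ℝ} (hρ : 0 < ρ)
    (hf : Tendsto f (𝓝[<] ρ) (𝓝 τ)) (hg : Tendsto g (𝓝[<] ρ) (𝓝 σ))
    (hsys : ∀ z ∈ Set.Ioo 0 ρ,
      f z = x * z + 2 * f z * g z + f z ^ 2 ∧ g z = z + 2 * f z * g z + g z ^ 2) :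
    τ = x * ρ + 2 * τ * σ + τ ^ 2 ∧ σ = ρ + 2 * τ * σ + σ ^ 2 := by
  have hid : Tendsto (fun z : ℝ => z) (𝓝[<] ρ) (𝓝 ρ) :=
    tendsto_nhdsWithin_of_tendsto_nhds tendsto_id
  have hev : ∀ᶠ z in 𝓝[<] ρ, z ∈ Set.Ioo 0 ρ := Ioo_mem_nhdsLT hρ
  have hfg := (hf.const_mul 2).mul hg
  exact ⟨tendsto_nhds_unique hf <| (((hid.const_mul x).add hfg).add (hf.pow 2)).congr'
      (hev.mono fun z hz => (hsys z hz).1.symm),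
    tendsto_nhds_unique hg <| ((hid.add hfg).add (hg.pow 2)).congr'
      (hev.mono fun z hz => (hsys z hz).2.symm)⟩

lemma admissible_of_limit_system {x ρ τ σ : ℝ} (hx : 0 < x) (hρ : 0 < ρ) (hτ : τ ≤ 1 / 2)
    (hσ : σ ≤ 1 / 2) (hτeq : τ = x * ρ + 2 * τ * σ + τ ^ 2) (hσeq : σ = ρ + 2 * τ * σ + σ ^ 2)
    (hdeg : τ + σ ≠ 1 / 2) :
    τ < 1 / 2 ∧ σ < 1 / 2 ∧
      ρ / (1 - 2 * τ) ^ 2 < 1 / 4 ∧ x * ρ / (1 - 2 * σ) ^ 2 < 1 / 4 := by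
  have hτlt : τ < 1 / 2 := lt_of_le_of_ne hτ (by rintro rfl; nlinarith)
  have hσlt : σ < 1 / 2 := lt_of_le_of_ne hσ (by rintro rfl; nlinarith [mul_pos hx hρ])
  have hgap : 0 < (1 / 2 - τ - σ) ^ 2 := by
    have : 1 / 2 - τ - σ ≠ 0 := fun h => hdeg (by linarith)
    positivity
  have hρgap : ρ = (1 - 2 * τ) ^ 2 / 4 - (1 / 2 - τ - σ) ^ 2 := by linear_combination -hσeq
  have hxρgap : x * ρ = (1 - 2 * σ) ^ 2 / 4 - (1 / 2 - τ - σ) ^ 2 := by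
    linear_combination -hτeq
  refine ⟨hτlt, hσlt, ?_, ?_⟩
  · rw [div_lt_iff₀ (pow_pos (by linarith) 2)]
    linarith
  · rw [div_lt_iff₀ (pow_pos (by linarith) 2)]
    linarith

theorem add_ne_half_of_not_summable {F G : ℝ⟦X⟧} {x ρ τ σ : ℝ} (hF : ∀ n, 0 ≤ coeff n F)
    (hG : ∀ n, 0 ≤ coeff n G) (hF0 : coeff 0 F = 0) (hG0 : coeff 0 G = 0) (hx : 0 < x)
    (hρ : 0 < ρ) (hFsys : F = C x * X + 2 * F * G + F ^ 2)
    (hGsys : G = C 1 * X + 2 * G * F + G ^ 2) (hτ : 0 ≤ τ) (hσ : 0 ≤ σ)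
    (hτeq : τ = x * ρ + 2 * τ * σ + τ ^ 2) (hσeq : σ = ρ + 2 * τ * σ + σ ^ 2)
    (hdiv : ∀ z, ρ < z → ¬ Summable fun n => coeff n F * z ^ n) : τ + σ ≠ 1 / 2 := by
  intro hdeg
  have hτpos : 0 < τ := lt_of_le_of_ne hτ (by rintro rfl; nlinarith [mul_pos hx hρ])
  have hσpos : 0 < σ := lt_of_le_of_ne hσ (by rintro rfl; nlinarith)
  obtain ⟨z, hzρ, a, b, ha, hb, hae, hbe⟩ := exists_nonneg_solution_of_add_eq_half (ρ := ρ) hx.le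
    hτpos hσpos hdeg (by linear_combination -hσeq - 2 * σ * hdeg)
    (by linear_combination -hτeq - 2 * τ * hdeg)
  exact hdiv z hzρ (summable_of_nonneg_solution hF hG hF0 hG0 hx.le zero_le_one
    (hρ.trans hzρ).le hFsys hGsys ha hb hae (by linear_combination hbe))

theorem bicolored_tree_system_admissible_general
    (x : ℝ) (hx : 0 < x)
    (T : ℝ → ℝ)
    (hTeq : ∀ w ∈ Set.Icc (0 : ℝ) (1 / 4), T w = 1 / (1 - w * T w))
    (fc gc : ℕ → ℝ) (hfc : ∀ n, 0 ≤ fc n) (hgc : ∀ n, 0 ≤ gc n)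
    (hfc0 : fc 0 = 0) (hgc0 : gc 0 = 0)
    (f g : ℝ → ℝ)
    (hf : ∀ z : ℝ, f z = ∑' n : ℕ, fc n * z ^ n)
    (hg : ∀ z : ℝ, g z = ∑' n : ℕ, gc n * z ^ n)
    (ρ : ℝ) (hρ : 0 < ρ)
    (hconv : ∀ z : ℝ, 0 ≤ z → z < ρ → Summable (fun n : ℕ => fc n * z ^ n))
    (hdiv : ∀ z : ℝ, ρ < z → ¬ Summable (fun n : ℕ => fc n * z ^ n))
    (hsys : ∀ z : ℝ, 0 < z → z < ρ →
      f z < 1 / 2 ∧ g z < 1 / 2 ∧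
      z / (1 - 2 * f z) ^ 2 ≤ 1 / 4 ∧ x * z / (1 - 2 * g z) ^ 2 ≤ 1 / 4 ∧
      f z = (x * z / (1 - 2 * g z)) * T (x * z / (1 - 2 * g z) ^ 2) ∧
      g z = (z / (1 - 2 * f z)) * T (z / (1 - 2 * f z) ^ 2)) :
    ∃ τ σ : ℝ,
      Tendsto f (nhdsWithin ρ (Set.Iio ρ)) (nhds τ) ∧
      Tendsto g (nhdsWithin ρ (Set.Iio ρ)) (nhds σ) ∧
      τ < 1 / 2 ∧ σ < 1 / 2 ∧
      ρ / (1 - 2 * τ) ^ 2 < 1 / 4 ∧ x * ρ / (1 - 2 * σ) ^ 2 < 1 / 4 := by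
  have hpoly : ∀ z ∈ Set.Ioo 0 ρ,
      f z = x * z + 2 * f z * g z + f z ^ 2 ∧ g z = z + 2 * f z * g z + g z ^ 2 := by
    rintro z ⟨hz, hzρ⟩
    obtain ⟨hf2, hg2, hwf, hwg, hfT, hgT⟩ := hsys z hz hzρ
    have hfg := eq_add_mul_add_sq_of_eq_mul_catalan hTeq (by positivity) hg2 hwg hfT
    exact ⟨by linear_combination hfg, eq_add_mul_add_sq_of_eq_mul_catalan hTeq hz.le hf2 hwf hgT⟩
  have hfs : ∀ z ∈ Set.Ioo 0 ρ, Summable fun n => fc n * z ^ n :=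
    fun z hz => hconv z hz.1.le hz.2
  have hgs : ∀ z ∈ Set.Ioo 0 ρ, Summable fun n => gc n * z ^ n := by
    -- otherwise `g z` is the junk sum `0`, but `g z = z + 2 f g + g² > 0`
    intro z hz
    by_contra hns
    have := (hpoly z hz).2
    simp only [hg, tsum_eq_zero_of_not_summable hns] at this
    linarith [hz.1]
  obtain ⟨τ, hτI, hτ⟩ := exists_tendsto_nhdsLT_of_monotoneOn hρ
    (funext hf ▸ monotoneOn_tsum_mul_pow hfc (fun _ hz => hz.1.le) hfs)
    (fun z hz => hf z ▸ tsum_nonneg fun n => mul_nonneg (hfc n) (pow_nonneg hz.1.le n))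
    (fun z hz => (hsys z hz.1 hz.2).1.le)
  obtain ⟨σ, hσI, hσ⟩ := exists_tendsto_nhdsLT_of_monotoneOn hρ
    (funext hg ▸ monotoneOn_tsum_mul_pow hgc (fun _ hz => hz.1.le) hgs)
    (fun z hz => hg z ▸ tsum_nonneg fun n => mul_nonneg (hgc n) (pow_nonneg hz.1.le n))
    (fun z hz => (hsys z hz.1 hz.2).2.1.le)
  obtain ⟨hτeq, hσeq⟩ := eq_system_of_tendsto hρ hτ hσ hpoly
  refine ⟨τ, σ, hτ, hσ, admissible_of_limit_system hx hρ hτI.2 hσI.2 hτeq hσeq ?_⟩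
  have hF : mk fc = C x * X + 2 * mk fc * mk gc + mk fc ^ 2 :=
    eq_C_mul_X_add_of_tsum_eq hρ (by simpa using hfs) (by simpa using hgs) fun z hz => by
      simpa [← hf, ← hg] using (hpoly z hz).1
  have hG : mk gc = C 1 * X + 2 * mk gc * mk fc + mk gc ^ 2 :=
    eq_C_mul_X_add_of_tsum_eq hρ (by simpa using hgs) (by simpa using hfs) fun z hz => by
      simpa [← hf, ← hg, mul_right_comm _ (f z)] using (hpoly z hz).2
  exact add_ne_half_of_not_summable (by simpa using hfc) (by simpa using hgc) (by simpa using hfc0)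
    (by simpa using hgc0) hx hρ hF hG hτI.1 hσI.1 hτeq hσeq fun z hz => by simpa using hdiv z hz

/-- The "Claim" in the proof of Theorem 3.3 of the paper (admissibility of the
system defining the weighted generating functions `f`, `g` of black- and
white-rooted bicolored labelled trees with weight `x` at black vertices).
Here `T` is the Catalan generating function (of rooted plane trees counted by
edges), `f` and `g` are power series with nonnegative coefficients and zero
constant term satisfying the system on `(0, ρ)`, where `ρ` is the radius of
convergence of `f`.  The conclusion is that the one-sided limits
`τ = lim_{z→ρ⁻} f(z)` and `σ = lim_{z→ρ⁻} g(z)` exist and satisfy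
`τ < 1/2`, `σ < 1/2`, `ρ/(1-2τ)² < 1/4` and `xρ/(1-2σ)² < 1/4`. -/
theorem bicolored_tree_system_admissible
    (x : ℝ) (hx : 0 < x)
    (T : ℝ → ℝ) (hT0 : T 0 = 1)
    (hTcont : ContinuousOn T (Set.Icc 0 (1 / 4)))
    (hTeq : ∀ w ∈ Set.Icc (0 : ℝ) (1 / 4), T w = 1 / (1 - w * T w))
    (fc gc : ℕ → ℝ) (hfc : ∀ n, 0 ≤ fc n) (hgc : ∀ n, 0 ≤ gc n)
    (hfc0 : fc 0 = 0) (hgc0 : gc 0 = 0)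
    (f g : ℝ → ℝ)
    (hf : ∀ z : ℝ, f z = ∑' n : ℕ, fc n * z ^ n)
    (hg : ∀ z : ℝ, g z = ∑' n : ℕ, gc n * z ^ n)
    (ρ : ℝ) (hρ : 0 < ρ)
    (hconv : ∀ z : ℝ, 0 ≤ z → z < ρ → Summable (fun n : ℕ => fc n * z ^ n))
    (hdiv : ∀ z : ℝ, ρ < z → ¬ Summable (fun n : ℕ => fc n * z ^ n))
    (hsys : ∀ z : ℝ, 0 < z → z < ρ →
      f z < 1 / 2 ∧ g z < 1 / 2 ∧
      z / (1 - 2 * f z) ^ 2 ≤ 1 / 4 ∧ x * z / (1 - 2 * g z) ^ 2 ≤ 1 / 4 ∧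
      f z = (x * z / (1 - 2 * g z)) * T (x * z / (1 - 2 * g z) ^ 2) ∧
      g z = (z / (1 - 2 * f z)) * T (z / (1 - 2 * f z) ^ 2)) :
    ∃ τ σ : ℝ,
      Tendsto f (nhdsWithin ρ (Set.Iio ρ)) (nhds τ) ∧
      Tendsto g (nhdsWithin ρ (Set.Iio ρ)) (nhds σ) ∧
      τ < 1 / 2 ∧ σ < 1 / 2 ∧
      ρ / (1 - 2 * τ) ^ 2 < 1 / 4 ∧ x * ρ / (1 - 2 * σ) ^ 2 < 1 / 4 :=
  bicolored_tree_system_admissible_general x hx T hTeq fc gc hfc hgc hfc0 hgc0 f g hf hg ρ hρ hconv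
    hdiv hsys
end

section
/- Let f : ℕ × ℕ → ℝ satisfy f(i,j) ≥ 0 for all i, j and f(0,j) = 0 for all j, and let ρ > 0. Define a sequence (τ_h) in [0, ∞] by τ₀ = 0 and τ_{h+1} = Σ_{i,j} f(i,j) · ρ^i · (τ_h)^j (with the convention 0⁰ = 1); this sequence is nondecreasing. Assume that τ* := sup_h τ_h is finite, that Σ_{i,j} f(i,j) ρ^i (τ*)^j converges, and that Σ_{i,j} j · f(i,j) · ρ^i · (τ*)^{j−1} < 1. Then there exist constants C > 0 and c > 0 such that τ* − τ_h ≤ C · e^{−c·h} for all h ≥ 0. -/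
open Real ENNReal

/-! Since `x ↦ F(ρ, x)` is monotone, the limit `τ*` of the iterates satisfies `τ* ≤ F(ρ, τ*)`.
Summing the termwise mean-value bound `yʲ ≤ xʲ + j yʲ⁻¹ (y - x)` (for `x ≤ y`) then gives
`τ* - τ_{h+1} ≤ F_y(ρ, τ*) (τ* - τ_h)`, so `τ* - τ_h ≤ F_y(ρ, τ*)ʰ τ*` decays geometrically. -/

section CanonicallyOrdered

variable {R : Type*} [CommSemiring R] [PartialOrder R] [CanonicallyOrderedAdd R] [Sub R]
  [OrderedSub R]

theorem pow_succ_le_pow_succ_add_mul_tsub {a b : R} (hba : b ≤ a) (j : ℕ) :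
    a ^ (j + 1) ≤ b ^ (j + 1) + (j + 1) * a ^ j * (a - b) := by
  induction j with
  | zero => simpa using le_add_tsub
  | succ j ih =>
    have hcross : a * b ^ (j + 1) ≤ b ^ (j + 2) + a ^ (j + 1) * (a - b) :=
      calc a * b ^ (j + 1) ≤ (b + (a - b)) * b ^ (j + 1) := mul_le_mul_left le_add_tsub _
        _ = b ^ (j + 2) + b ^ (j + 1) * (a - b) := by ring
        _ ≤ b ^ (j + 2) + a ^ (j + 1) * (a - b) := by gcongr
    calc a ^ (j + 2) = a * a ^ (j + 1) := by ring
      _ ≤ a * (b ^ (j + 1) + (j + 1) * a ^ j * (a - b)) := mul_le_mul_right ih a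
      _ = a * b ^ (j + 1) + (j + 1) * a ^ (j + 1) * (a - b) := by ring
      _ ≤ b ^ (j + 2) + a ^ (j + 1) * (a - b) + (j + 1) * a ^ (j + 1) * (a - b) := by
        gcongr
      _ = b ^ (j + 2) + ((j + 1 : ℕ) + 1) * a ^ (j + 1) * (a - b) := by push_cast; ring

theorem pow_le_pow_add_mul_pow_pred_mul_tsub {a b : R} (hba : b ≤ a) (j : ℕ) :
    a ^ j ≤ b ^ j + j * a ^ (j - 1) * (a - b) := by
  cases j with
  | zero => simp
  | succ j => simpa using pow_succ_le_pow_succ_add_mul_tsub hba j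

end CanonicallyOrdered

theorem pow_mul_le_of_le_mul {M : Type*} [CommMonoid M] [Preorder M] [MulLeftMono M]
    {u : ℕ → M} {L : M} (hu : ∀ n, u (n + 1) ≤ L * u n) (n : ℕ) : u n ≤ L ^ n * u 0 := by
  induction n with
  | zero => simp
  | succ n ih =>
    calc u (n + 1) ≤ L * u n := hu n
      _ ≤ L * (L ^ n * u 0) := mul_le_mul_right ih L
      _ = L ^ (n + 1) * u 0 := by rw [pow_succ', mul_assoc]

theorem iSup_le_apply_iSup_of_iterate {α : Type*} [CompleteLattice α] {F : α → α} (hF : Monotone F)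
    {u : ℕ → α} (hu0 : u 0 ≤ F (u 0)) (hu : ∀ n, u (n + 1) = F (u n)) :
    ⨆ n, u n ≤ F (⨆ n, u n) :=
  iSup_le fun n => match n with
    | 0 => hu0.trans (hF (le_iSup u 0))
    | n + 1 => (hu n).trans_le (hF (le_iSup u n))

namespace ENNReal

theorem tsum_mul_pow_le_tsum_mul_pow_add {ι : Type*} (a : ι → ℝ≥0∞) (n : ι → ℕ) {x y : ℝ≥0∞}
    (hxy : x ≤ y) :
    ∑' i, a i * y ^ n i ≤ ∑' i, a i * x ^ n i + (∑' i, n i * a i * y ^ (n i - 1)) * (y - x) :=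
  calc ∑' i, a i * y ^ n i
      ≤ ∑' i, (a i * x ^ n i + n i * a i * y ^ (n i - 1) * (y - x)) :=
        ENNReal.tsum_le_tsum fun i =>
          (mul_le_mul_right (pow_le_pow_add_mul_pow_pred_mul_tsub hxy (n i)) (a i)).trans_eq
            (by ring)
    _ = _ := by rw [ENNReal.tsum_add, ENNReal.tsum_mul_right]

theorem monotone_tsum_mul_pow {ι : Type*} (a : ι → ℝ≥0∞) (n : ι → ℕ) :
    Monotone fun x : ℝ≥0∞ => ∑' i, a i * x ^ n i :=
  fun _ _ hxy => ENNReal.tsum_le_tsum fun i => mul_le_mul_right (pow_le_pow_left' hxy (n i)) (a i)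

theorem exists_exp_bound_of_le_pow_mul {u : ℕ → ℝ≥0∞} {L M : ℝ≥0∞} (hL : L < 1) (hM : M ≠ ⊤)
    (hu : ∀ n, u n ≤ L ^ n * M) :
    ∃ C > (0 : ℝ), ∃ c > (0 : ℝ), ∀ n : ℕ, u n ≤ ENNReal.ofReal (C * Real.exp (-c * n)) := by
  obtain ⟨q, -, hLq, hq1⟩ := ENNReal.lt_iff_exists_real_btwn.1 hL
  have hq0 : 0 < q := ENNReal.ofReal_pos.1 (hLq.trans_le' bot_le)
  refine ⟨M.toReal + 1, by positivity, -Real.log q,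
    neg_pos.2 (Real.log_neg hq0 (ENNReal.ofReal_lt_one.1 hq1)), fun n => ?_⟩
  have hexp : Real.exp (-(-Real.log q) * n) = q ^ n := by
    rw [neg_neg, mul_comm, Real.exp_nat_mul, Real.exp_log hq0]
  calc u n ≤ L ^ n * M := hu n
    _ ≤ ENNReal.ofReal q ^ n * ENNReal.ofReal M.toReal := by
      rw [ENNReal.ofReal_toReal hM]; gcongr
    _ = ENNReal.ofReal (q ^ n * M.toReal) := by
      rw [ENNReal.ofReal_mul (by positivity), ENNReal.ofReal_pow hq0.le]
    _ ≤ ENNReal.ofReal ((M.toReal + 1) * Real.exp (-(-Real.log q) * n)) := by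
      rw [hexp, mul_comm]; gcongr; linarith

end ENNReal

theorem critical_iteration_geometric_convergence_general
    (f : ℕ × ℕ → ℝ)
    (ρ : ℝ)
    (τ : ℕ → ℝ≥0∞) (hτ0 : τ 0 = 0)
    (hτrec : ∀ h : ℕ, τ (h + 1) =
      ∑' p : ℕ × ℕ, ENNReal.ofReal (f p) * ENNReal.ofReal ρ ^ p.1 * τ h ^ p.2)
    (τs : ℝ≥0∞) (hτs : τs = ⨆ h : ℕ, τ h) (hfin : τs ≠ ⊤)
    (hcrit : (∑' p : ℕ × ℕ,
        (p.2 : ℝ≥0∞) * ENNReal.ofReal (f p) * ENNReal.ofReal ρ ^ p.1 * τs ^ (p.2 - 1)) < 1) :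
    ∃ C > (0 : ℝ), ∃ c > (0 : ℝ), ∀ h : ℕ,
      τs - τ h ≤ ENNReal.ofReal (C * Real.exp (-c * h)) := by
  set a : ℕ × ℕ → ℝ≥0∞ := fun p => ENNReal.ofReal (f p) * ENNReal.ofReal ρ ^ p.1
  set L := ∑' p : ℕ × ℕ,
    (p.2 : ℝ≥0∞) * ENNReal.ofReal (f p) * ENNReal.ofReal ρ ^ p.1 * τs ^ (p.2 - 1)
  have hfix : τs ≤ ∑' p, a p * τs ^ p.2 := hτs ▸
    iSup_le_apply_iSup_of_iterate (ENNReal.monotone_tsum_mul_pow a Prod.snd) (by simp [hτ0]) hτrec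
  have hstep : ∀ h, τs - τ (h + 1) ≤ L * (τs - τ h) := fun h => by
    rw [tsub_le_iff_right, hτrec h, add_comm]
    calc τs ≤ ∑' p, a p * τs ^ p.2 := hfix
      _ ≤ _ := ENNReal.tsum_mul_pow_le_tsum_mul_pow_add a Prod.snd (hτs ▸ le_iSup τ h)
      _ = _ := by simp only [a, L, mul_assoc]
  refine ENNReal.exists_exp_bound_of_le_pow_mul hcrit hfin fun h => ?_
  simpa [hτ0] using pow_mul_le_of_le_mul (u := fun h => τs - τ h) hstep h

/-- The core estimate in the proof of Lemma 4.2 of the paper (critical-case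
height lemma): for a bivariate power series `F(z,y) = ∑ f(i,j) zⁱ yʲ` with
nonnegative coefficients and `F(0,y) = 0`, the iterates `τ₀ = 0`,
`τ_{h+1} = F(ρ, τ_h)` (computed in `[0,∞]`) converge geometrically to
`τ* = sup_h τ_h`, provided `τ*` is finite, `F(ρ, τ*)` converges, and
`F_y(ρ, τ*) < 1`. -/
theorem critical_iteration_geometric_convergence
    (f : ℕ × ℕ → ℝ) (hf : ∀ p, 0 ≤ f p) (hf0 : ∀ j : ℕ, f (0, j) = 0)
    (ρ : ℝ) (hρ : 0 < ρ)
    (τ : ℕ → ℝ≥0∞) (hτ0 : τ 0 = 0)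
    (hτrec : ∀ h : ℕ, τ (h + 1) =
      ∑' p : ℕ × ℕ, ENNReal.ofReal (f p) * ENNReal.ofReal ρ ^ p.1 * τ h ^ p.2)
    (τs : ℝ≥0∞) (hτs : τs = ⨆ h : ℕ, τ h) (hfin : τs ≠ ⊤)
    (hconv : (∑' p : ℕ × ℕ, ENNReal.ofReal (f p) * ENNReal.ofReal ρ ^ p.1 * τs ^ p.2) ≠ ⊤)
    (hcrit : (∑' p : ℕ × ℕ,
        (p.2 : ℝ≥0∞) * ENNReal.ofReal (f p) * ENNReal.ofReal ρ ^ p.1 * τs ^ (p.2 - 1)) < 1) :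
    ∃ C > (0 : ℝ), ∃ c > (0 : ℝ), ∀ h : ℕ,
      τs - τ h ≤ ENNReal.ofReal (C * Real.exp (-c * h)) :=
  critical_iteration_geometric_convergence_general f ρ τ hτ0 hτrec τs hτs hfin hcrit
end

section
/- Let ρ > 0 and let (a_h)_{h ≥ 0} be a sequence of functions a_h : ℕ → ℝ with 0 ≤ a_h(n) ≤ a_{h+1}(n) for all h and n, and suppose a(n) := sup_h a_h(n) is finite for every n. Assume there are constants C > 0 and c > 0 such that Σ_n (a(n) − a_h(n)) · ρ^n ≤ C · e^{−c·h} for every h ≥ 0, and that there are α > 0, c₁ > 0 and N such that a(n) ≥ c₁ · n^{−α} · ρ^{−n} for all n ≥ N. Then there exists c' > 0 such that for every sufficiently small ε > 0 there is n₀(ε) with: for all n ≥ n₀(ε), (a(n) − a_{⌊n^ε⌋}(n)) / a(n) ≤ exp(−n^{c'ε}). -/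
open Real Filter Asymptotics

/-! Every single coefficient is dominated by the tail generating function, so
`(a(n) - a_h(n)) ρⁿ ≤ C e^{-ch}`. Dividing by the lower bound `a(n) ≥ c₁ n^{-α} ρ^{-n}`
cancels the exponential growth `ρ^{-n}` and leaves `(C/c₁) n^α e^{-ch}`; for `h = ⌊n^ε⌋`
this is `e^{-c n^ε + O(log n)}`, eventually below `exp(-n^{ε/2})`. -/

lemma rpow_isLittleO_rpow_atTop {δ ε : ℝ} (hδε : δ < ε) :
    (fun x : ℝ => x ^ δ) =o[atTop] fun x => x ^ ε := by
  refine (isLittleO_iff_tendsto' ?_).2 ?_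
  · filter_upwards [eventually_gt_atTop 0] with x hx hx0
    exact absurd hx0 (rpow_pos_of_pos hx ε).ne'
  · refine (tendsto_rpow_neg_atTop (sub_pos.2 hδε)).congr' ?_
    filter_upwards [eventually_gt_atTop 0] with x hx
    rw [← rpow_sub hx, neg_sub]

lemma eventually_const_add_mul_log_add_rpow_le (K α : ℝ) {c δ ε : ℝ} (hc : 0 < c)
    (hδε : δ < ε) (hε : 0 < ε) :
    ∀ᶠ x in atTop, K + α * log x + x ^ δ ≤ c * x ^ ε := by
  have hK : (fun _ => K) =o[atTop] fun x : ℝ => x ^ ε :=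
    isLittleO_const_left.2 <| Or.inr <| tendsto_norm_atTop_atTop.comp (tendsto_rpow_atTop hε)
  have hlog := (isLittleO_log_rpow_atTop hε).const_mul_left α
  filter_upwards [((hK.add hlog).add (rpow_isLittleO_rpow_atTop hδε)).bound hc,
    eventually_ge_atTop 0] with x hbound hx
  rw [norm_of_nonneg (rpow_nonneg hx ε)] at hbound
  exact (le_norm_self _).trans hbound

lemma sub_div_le_div_of_mul_pow_le {ρ A a T L : ℝ} {n : ℕ} (hρ : 0 < ρ) (hL : 0 < L) (hT : 0 ≤ T)
    (hterm : (A - a) * ρ ^ n ≤ T) (hlow : L * ρ ^ (-(n : ℝ)) ≤ A) :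
    (A - a) / A ≤ T / L := by
  have hρn : 0 < ρ ^ n := pow_pos hρ n
  rw [rpow_neg hρ.le, rpow_natCast, ← div_eq_mul_inv] at hlow
  have hA : 0 < A := (div_pos hL hρn).trans_le hlow
  calc (A - a) / A ≤ T / ρ ^ n / A := by
        gcongr
        exact (le_div_iff₀ hρn).2 hterm
    _ ≤ T / ρ ^ n / (L / ρ ^ n) := by gcongr
    _ = T / L := by field_simp

lemma mul_exp_neg_floor_div_le {C c c₁ α δ ε x : ℝ} (hC : 0 < C) (hc : 0 < c) (hc₁ : 0 < c₁)
    (hx : 0 < x) (hkey : log C - log c₁ + c + α * log x + x ^ δ ≤ c * x ^ ε) :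
    C * exp (-c * ⌊x ^ ε⌋₊) / (c₁ * x ^ (-α)) ≤ exp (-x ^ δ) := by
  rw [div_le_iff₀ (by positivity)]
  calc C * exp (-c * ⌊x ^ ε⌋₊) ≤ C * exp (c - c * x ^ ε) := by
        have := Nat.lt_floor_add_one (x ^ ε)
        gcongr
        nlinarith
    _ = exp (log C + (c - c * x ^ ε)) := by rw [exp_add, exp_log hC]
    _ ≤ exp (-x ^ δ + (log c₁ + log x * (-α))) := exp_le_exp.2 (by linarith)
    _ = exp (-x ^ δ) * (c₁ * x ^ (-α)) := by
        rw [exp_add, exp_add, exp_log hc₁, rpow_def_of_pos hx (-α)]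

theorem height_small_with_exponential_rate_general
    (ρ : ℝ) (hρ : 0 < ρ)
    (a : ℕ → ℕ → ℝ)
    (hbdd : ∀ n, BddAbove (Set.range fun h => a h n))
    (A : ℕ → ℝ) (hA : ∀ n, A n = ⨆ h : ℕ, a h n)
    (C c : ℝ) (hC : 0 < C) (hc : 0 < c)
    (hsumm : ∀ h : ℕ, Summable (fun n : ℕ => (A n - a h n) * ρ ^ n))
    (htail : ∀ h : ℕ, (∑' n : ℕ, (A n - a h n) * ρ ^ n) ≤ C * Real.exp (-c * h))
    (α c₁ : ℝ) (hc₁ : 0 < c₁)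
    (N : ℕ) (hlow : ∀ n : ℕ, N ≤ n → c₁ * (n : ℝ) ^ (-α) * ρ ^ (-(n : ℝ)) ≤ A n) :
    ∃ c' > (0 : ℝ), ∃ ε₀ > (0 : ℝ), ∀ ε : ℝ, 0 < ε → ε < ε₀ →
      ∃ n₀ : ℕ, ∀ n : ℕ, n₀ ≤ n →
        (A n - a ⌊(n : ℝ) ^ ε⌋₊ n) / A n ≤ Real.exp (-(n : ℝ) ^ (c' * ε)) := by
  refine ⟨1 / 2, by norm_num, 1, one_pos, fun ε hε _ => ?_⟩
  have hgrowth := tendsto_natCast_atTop_atTop.eventually <|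
    eventually_const_add_mul_log_add_rpow_le (log C - log c₁ + c) α hc
      (by linarith : 1 / 2 * ε < ε) hε
  obtain ⟨n₀, hn₀⟩ := (hgrowth.and (eventually_ge_atTop (max N 1))).exists_forall_of_atTop
  refine ⟨n₀, fun n hn => ?_⟩
  obtain ⟨hkey, hNn, h1n⟩ := (hn₀ n hn).imp_right max_le_iff.1
  set h := ⌊(n : ℝ) ^ ε⌋₊
  have hterm : (A n - a h n) * ρ ^ n ≤ C * exp (-c * h) := by
    refine ((hsumm h).le_tsum n fun j _ => ?_).trans (htail h)
    have haA : a h j ≤ A j := (hA j).symm ▸ le_ciSup (hbdd j) h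
    exact mul_nonneg (sub_nonneg.2 haA) (pow_nonneg hρ.le j)
  have hn : (0 : ℝ) < n := by exact_mod_cast h1n
  calc (A n - a h n) / A n ≤ C * exp (-c * h) / (c₁ * (n : ℝ) ^ (-α)) :=
        sub_div_le_div_of_mul_pow_le hρ (by positivity) (by positivity) hterm (hlow n hNn)
    _ ≤ exp (-(n : ℝ) ^ (1 / 2 * ε)) := mul_exp_neg_floor_div_le hC hc hc₁ hn hkey

/-- The concluding step of Lemma 4.2 of the paper: if `a_h(n)` (the total
weight of objects of size `n` with height-parameter at most `h`) increases to
`a(n)`, the tail generating functions at the singularity decay geometrically,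
`∑_n (a(n) - a_h(n)) ρⁿ ≤ C e^{-ch}`, and `a(n) = Ω(n^{-α} ρ^{-n})`, then the
height-parameter is at most `n^ε` a.a.s. with exponential rate: the
probability `(a(n) - a_{⌊n^ε⌋}(n))/a(n)` is at most `exp(-n^{c'ε})`. -/
theorem height_small_with_exponential_rate
    (ρ : ℝ) (hρ : 0 < ρ)
    (a : ℕ → ℕ → ℝ)
    (hnn : ∀ h n, 0 ≤ a h n)
    (hmono : ∀ h n, a h n ≤ a (h + 1) n)
    (hbdd : ∀ n, BddAbove (Set.range fun h => a h n))
    (A : ℕ → ℝ) (hA : ∀ n, A n = ⨆ h : ℕ, a h n)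
    (C c : ℝ) (hC : 0 < C) (hc : 0 < c)
    (hsumm : ∀ h : ℕ, Summable (fun n : ℕ => (A n - a h n) * ρ ^ n))
    (htail : ∀ h : ℕ, (∑' n : ℕ, (A n - a h n) * ρ ^ n) ≤ C * Real.exp (-c * h))
    (α c₁ : ℝ) (hα : 0 < α) (hc₁ : 0 < c₁)
    (N : ℕ) (hlow : ∀ n : ℕ, N ≤ n → c₁ * (n : ℝ) ^ (-α) * ρ ^ (-(n : ℝ)) ≤ A n) :
    ∃ c' > (0 : ℝ), ∃ ε₀ > (0 : ℝ), ∀ ε : ℝ, 0 < ε → ε < ε₀ →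
      ∃ n₀ : ℕ, ∀ n : ℕ, n₀ ≤ n →
        (A n - a ⌊(n : ℝ) ^ ε⌋₊ n) / A n ≤ Real.exp (-(n : ℝ) ^ (c' * ε)) :=
  height_small_with_exponential_rate_general ρ hρ a hbdd A hA C c hC hc hsumm htail α c₁ hc₁ N hlow
end

section
/- Let r ≥ 1 and ρ > 0. For each j ∈ {1,…,r} let F_j(z, y₁,…,y_r) = Σ_{i, m} f_j(i, m) · z^i · y₁^{m₁} ⋯ y_r^{m_r} be a power series (sum over i ∈ ℕ and m ∈ ℕ^r) with nonnegative coefficients f_j(i,m) ≥ 0 and with F_j(0, y) = 0. Define vectors τ₀ = 0 ∈ ℝ^r and τ_{h+1} = (F₁(ρ, τ_h), …, F_r(ρ, τ_h)); this sequence is nondecreasing coordinatewise. Assume τ* := sup_h τ_h is finite in every coordinate, each series F_j converges at (ρ, τ*), each entry M_{j,l} := (∂F_j/∂y_l)(ρ, τ*) = Σ_{i,m} m_l · f_j(i,m) ρ^i (τ*)^{m − e_l} is finite, and the spectral radius of the nonnegative r × r matrix M = (M_{j,l}) is strictly less than 1. Then there exist constants C > 0 and c > 0 such that max_{1 ≤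 j ≤ r} (τ*_j − τ_{h,j}) ≤ C · e^{−c·h} for all h ≥ 0. -/
/-!
Every iterate satisfies `τ_{h+1} = F(ρ, τ_h) ≤ F(ρ, τ*)`, so `τ* ≤ F(ρ, τ*)`. For `x ≤ y` the
monomial inequality `y^m ≤ x^m + Σ_l m_l y^(m - e_l) (y_l - x_l)` then turns this into the linear
recursion `τ* - τ_{h+1} ≤ M (τ* - τ_h)`, whence `τ* - τ_h ≤ M^h (τ* - τ_0)`. By Gelfand's formula
the spectral radius of `M` being `< 1` gives `‖M^h‖ ≤ K q^h` with `q < 1`.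
-/

open Real ENNReal

section CanonicallyOrdered

variable {R : Type*} [CommSemiring R] [PartialOrder R] [CanonicallyOrderedAdd R] [Sub R]
  [OrderedSub R]

theorem pow_le_pow_add_mul_tsub {x y : R} (hxy : x ≤ y) :
    ∀ n : ℕ, y ^ n ≤ x ^ n + n * y ^ (n - 1) * (y - x)
  | 0 => by simp
  | n + 1 => by
    have hn : (n : R) * (y ^ (n - 1) * y) = n * y ^ n := by
      cases n with
      | zero => simp
      | succ n => rw [Nat.add_sub_cancel, ← pow_succ]
    calc y ^ (n + 1) = y ^ n * y := pow_succ y n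
      _ ≤ (x ^ n + n * y ^ (n - 1) * (y - x)) * y := by
        gcongr; exact pow_le_pow_add_mul_tsub hxy n
      _ = x ^ n * (x + (y - x)) + n * (y ^ (n - 1) * y) * (y - x) := by
        rw [add_tsub_cancel_of_le hxy]; ring
      _ ≤ x ^ (n + 1) + y ^ n * (y - x) + n * y ^ n * (y - x) := by
        rw [hn, mul_add, ← pow_succ]
        gcongr
      _ = x ^ (n + 1) + (n + 1 : ℕ) * y ^ (n + 1 - 1) * (y - x) := by push_cast; ring

theorem Finset.prod_pow_le_prod_pow_add_sum {ι : Type*} [DecidableEq ι] (s : Finset ι)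
    {x y : ι → R} (hxy : x ≤ y) (m : ι → ℕ) :
    ∏ l ∈ s, y l ^ m l ≤ ∏ l ∈ s, x l ^ m l +
      ∑ l ∈ s, m l * (∏ l' ∈ s, y l' ^ (m l' - if l' = l then 1 else 0)) * (y l - x l) := by
  induction s using Finset.cons_induction with
  | empty => simp
  | cons a s ha ih =>
    have hprod : ∏ l' ∈ s, y l' ^ (m l' - if l' = a then 1 else 0) = ∏ l' ∈ s, y l' ^ m l' :=
      Finset.prod_congr rfl fun l hl => by rw [if_neg (ne_of_mem_of_not_mem hl ha), Nat.sub_zero]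
    have hexp : ∀ l ∈ s, (m a - if a = l then 1 else 0) = m a := fun l hl => by
      rw [if_neg (ne_of_mem_of_not_mem hl ha).symm, Nat.sub_zero]
    simp only [Finset.prod_cons, Finset.sum_cons, if_true]
    rw [hprod, Finset.sum_congr rfl fun l hl => by rw [hexp l hl]]
    have hsub : ∏ l ∈ s, x l ^ m l ≤ ∏ l ∈ s, y l ^ m l := by gcongr; exact hxy _
    calc y a ^ m a * ∏ l ∈ s, y l ^ m l
        ≤ (x a ^ m a + m a * y a ^ (m a - 1) * (y a - x a)) * ∏ l ∈ s, y l ^ m l := by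
          gcongr; exact pow_le_pow_add_mul_tsub (hxy a) _
      _ = x a ^ m a * ∏ l ∈ s, y l ^ m l +
          m a * (y a ^ (m a - 1) * ∏ l ∈ s, y l ^ m l) * (y a - x a) := by ring
      _ ≤ x a ^ m a * (∏ l ∈ s, x l ^ m l + ∑ l ∈ s, m l *
            (∏ l' ∈ s, y l' ^ (m l' - if l' = l then 1 else 0)) * (y l - x l)) +
          m a * (y a ^ (m a - 1) * ∏ l ∈ s, y l ^ m l) * (y a - x a) := by gcongr
      _ = x a ^ m a * ∏ l ∈ s, x l ^ m l +
          (m a * (y a ^ (m a - 1) * ∏ l ∈ s, y l ^ m l) * (y a - x a) + x a ^ m a * ∑ l ∈ s,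
            m l * (∏ l' ∈ s, y l' ^ (m l' - if l' = l then 1 else 0)) * (y l - x l)) := by ring
      _ ≤ x a ^ m a * ∏ l ∈ s, x l ^ m l +
          (m a * (y a ^ (m a - 1) * ∏ l ∈ s, y l ^ m l) * (y a - x a) + y a ^ m a * ∑ l ∈ s,
            m l * (∏ l' ∈ s, y l' ^ (m l' - if l' = l then 1 else 0)) * (y l - x l)) := by
          gcongr; exact hxy a
      _ = _ := by
          rw [Finset.mul_sum]
          congr 2
          exact Finset.sum_congr rfl fun l _ => by ring

end CanonicallyOrdered

section Series

variable {κ ι : Type*} [Fintype ι] (a : κ → ℝ≥0∞) (e : κ → ι → ℕ)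

theorem ENNReal.tsum_mul_prod_pow_mono {x y : ι → ℝ≥0∞} (hxy : x ≤ y) :
    ∑' k, a k * ∏ l, x l ^ e k l ≤ ∑' k, a k * ∏ l, y l ^ e k l := by
  gcongr with k l
  exact hxy l

theorem ENNReal.tsum_mul_prod_pow_le_add_sum [DecidableEq ι] {x y : ι → ℝ≥0∞} (hxy : x ≤ y) :
    ∑' k, a k * ∏ l, y l ^ e k l ≤ ∑' k, a k * ∏ l, x l ^ e k l +
      ∑ l, (∑' k, e k l * a k * ∏ l', y l' ^ (e k l' - if l' = l then 1 else 0)) * (y l - x l) := by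
  calc ∑' k, a k * ∏ l, y l ^ e k l
      ≤ ∑' k, (a k * ∏ l, x l ^ e k l + ∑ l,
          e k l * a k * (∏ l', y l' ^ (e k l' - if l' = l then 1 else 0)) * (y l - x l)) := by
        gcongr with k
        calc
          _ ≤ a k * (∏ l, x l ^ e k l + ∑ l,
              e k l * (∏ l', y l' ^ (e k l' - if l' = l then 1 else 0)) * (y l - x l)) := by
            gcongr; exact Finset.univ.prod_pow_le_prod_pow_add_sum hxy (e k)
          _ = _ := by
            rw [mul_add, Finset.mul_sum]
            exact congrArg _ (Finset.sum_congr rfl fun l _ => by ring)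
    _ = _ := by
        rw [ENNReal.tsum_add, Summable.tsum_finsetSum fun _ _ => ENNReal.summable]
        simp only [ENNReal.tsum_mul_right]

end Series

section BanachAlgebra

variable {A : Type*} [NormedRing A] [NormedAlgebra ℂ A] [CompleteSpace A]

open Filter in
theorem spectrum.exists_norm_pow_le_mul_pow_of_spectralRadius_lt {a : A} {q : ℝ}
    (hq : spectralRadius ℂ a < ENNReal.ofReal q) :
    ∃ K > 0, ∀ n : ℕ, ‖a ^ n‖ ≤ K * q ^ n := by
  have hq0 : 0 < q := ENNReal.ofReal_pos.mp (lt_of_le_of_lt bot_le hq)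
  have hev : ∀ᶠ n : ℕ in atTop, ‖a ^ n‖ ≤ q ^ n := by
    filter_upwards [(pow_norm_pow_one_div_tendsto_nhds_spectralRadius a).eventually_lt_const hq,
      eventually_gt_atTop 0] with n hn hn0
    rw [ENNReal.ofReal_lt_ofReal_iff hq0, one_div,
      Real.rpow_inv_lt_iff_of_pos (norm_nonneg _) hq0.le (by positivity), Real.rpow_natCast] at hn
    exact hn.le
  obtain ⟨K, hK, hbound⟩ := Asymptotics.bound_of_isBigO_nat_atTop
    (Asymptotics.IsBigO.of_bound (f := fun n => a ^ n) (g := fun n => q ^ n) 1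
      (hev.mono fun n hn => by rwa [one_mul, Real.norm_of_nonneg (by positivity)]))
  refine ⟨K, hK, fun n => ?_⟩
  simpa [abs_of_pos hq0] using hbound (pow_ne_zero n hq0.ne')

theorem spectrum.exists_norm_pow_le_exp_of_forall_norm_lt_one (a : A)
    (ha : ∀ μ ∈ spectrum ℂ a, ‖μ‖ < 1) :
    ∃ K > 0, ∃ c > 0, ∀ n : ℕ, ‖a ^ n‖ ≤ K * exp (-c * n) := by
  have hρ : spectralRadius ℂ a < 1 := by
    rcases subsingleton_or_nontrivial A with hA | hA
    · simp [spectralRadius, spectrum.of_subsingleton]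
    · exact_mod_cast spectrum.spectralRadius_lt_of_forall_lt a fun z hz => by
        exact_mod_cast ha z hz
  obtain ⟨q, -, hρq, hq1⟩ := ENNReal.lt_iff_exists_real_btwn.mp hρ
  have hq0 : 0 < q := ENNReal.ofReal_pos.mp (lt_of_le_of_lt bot_le hρq)
  have hq1 : q < 1 := by simpa using hq1
  obtain ⟨K, hK, hbound⟩ := exists_norm_pow_le_mul_pow_of_spectralRadius_lt hρq
  refine ⟨K, hK, -Real.log q, neg_pos.mpr (Real.log_neg hq0 hq1), fun n => ?_⟩
  rw [neg_neg, mul_comm (Real.log q), Real.exp_nat_mul, Real.exp_log hq0]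
  exact hbound n

end BanachAlgebra

namespace Matrix

variable {ι : Type*} [Fintype ι] [DecidableEq ι]

theorem le_pow_mulVec_of_le_mulVec {R : Type*} [Semiring R] [PartialOrder R] [IsOrderedRing R]
    {N : Matrix ι ι R} (hN : ∀ i j, 0 ≤ N i j) {u : ℕ → ι → R}
    (hu : ∀ h, u (h + 1) ≤ N *ᵥ u h) : ∀ h, u h ≤ (N ^ h) *ᵥ u 0
  | 0 => by simp
  | h + 1 => fun i => by
    rw [pow_succ', ← mulVec_mulVec]
    exact (hu h i).trans (dotProduct_le_dotProduct_of_nonneg_left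
      (le_pow_mulVec_of_le_mulVec hN hu h) (hN i))

attribute [local instance] Matrix.linftyOpNormedRing Matrix.linftyOpNormedAlgebra

theorem linfty_opNorm_map_ofReal (N : Matrix ι ι ℝ) : ‖N.map ((↑) : ℝ → ℂ)‖ = ‖N‖ := by
  simp [linfty_opNorm_def]

theorem exists_linfty_opNorm_pow_le_exp (N : Matrix ι ι ℝ)
    (hN : ∀ μ ∈ spectrum ℂ (N.map ((↑) : ℝ → ℂ)), ‖μ‖ < 1) :
    ∃ K > 0, ∃ c > 0, ∀ n : ℕ, ‖N ^ n‖ ≤ K * exp (-c * n) := by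
  obtain ⟨K, hK, c, hc, hbound⟩ := spectrum.exists_norm_pow_le_exp_of_forall_norm_lt_one _ hN
  refine ⟨K, hK, c, hc, fun n => ?_⟩
  rw [← linfty_opNorm_map_ofReal]
  exact (congrArg norm (map_pow Complex.ofRealHom.mapMatrix N n)).trans_le (hbound n)

theorem exists_le_exp_of_le_mulVec {N : Matrix ι ι ℝ} (hN0 : ∀ i j, 0 ≤ N i j)
    (hN : ∀ μ ∈ spectrum ℂ (N.map ((↑) : ℝ → ℂ)), ‖μ‖ < 1) {u : ℕ → ι → ℝ}
    (hu : ∀ h, u (h + 1) ≤ N *ᵥ u h) :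
    ∃ C > 0, ∃ c > 0, ∀ h i, u h i ≤ C * exp (-c * h) := by
  obtain ⟨K, hK, c, hc, hbound⟩ := exists_linfty_opNorm_pow_le_exp N hN
  refine ⟨K * (‖u 0‖ + 1), by positivity, c, hc, fun h i => ?_⟩
  calc u h i ≤ ((N ^ h) *ᵥ u 0) i := le_pow_mulVec_of_le_mulVec hN0 hu h i
    _ ≤ ‖(N ^ h) *ᵥ u 0‖ := (Real.le_norm_self _).trans (norm_le_pi_norm _ i)
    _ ≤ ‖N ^ h‖ * ‖u 0‖ := linfty_opNorm_mulVec _ _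
    _ ≤ K * exp (-c * h) * (‖u 0‖ + 1) := by gcongr; exacts [hbound h, by linarith]
    _ = _ := by ring

end Matrix

theorem ENNReal.exists_le_exp_of_le_sum_mul {ι : Type*} [Fintype ι] [DecidableEq ι]
    {M : ι → ι → ℝ≥0∞} (hM : ∀ j l, M j l ≠ ⊤)
    (hspec : ∀ μ ∈ spectrum ℂ (Matrix.of fun j l => (((M j l).toReal : ℝ) : ℂ)), ‖μ‖ < 1)
    {e : ℕ → ι → ℝ≥0∞} (he : ∀ h j, e h j ≠ ⊤)
    (hstep : ∀ h j, e (h + 1) j ≤ ∑ l, M j l * e h l) :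
    ∃ C > 0, ∃ c > 0, ∀ h j, e h j ≤ ENNReal.ofReal (C * exp (-c * h)) := by
  obtain ⟨C, hC, c, hc, hbound⟩ := Matrix.exists_le_exp_of_le_mulVec
    (N := Matrix.of fun j l => (M j l).toReal) (u := fun h j => (e h j).toReal)
    (fun _ _ => ENNReal.toReal_nonneg) hspec fun h j => by
      have hfin : ∑ l, M j l * e h l ≠ ⊤ :=
        ENNReal.sum_ne_top.mpr fun l _ => ENNReal.mul_ne_top (hM j l) (he h l)
      have := ENNReal.toReal_mono hfin (hstep h j)
      rw [ENNReal.toReal_sum fun l _ => ENNReal.mul_ne_top (hM j l) (he h l)] at this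
      simpa [Matrix.mulVec, dotProduct, ENNReal.toReal_mul] using this
  exact ⟨C, hC, c, hc, fun h j => (ENNReal.le_ofReal_iff_toReal_le (he h j)
    (by positivity)).mpr (hbound h j)⟩

theorem vector_critical_iteration_geometric_convergence_general
    (r : ℕ) (ρ : ℝ)
    (fc : Fin r → ℕ × (Fin r → ℕ) → ℝ)
    (τ : ℕ → Fin r → ℝ≥0∞) (hτ0 : ∀ j, τ 0 j = 0)
    (hτrec : ∀ h : ℕ, ∀ j : Fin r, τ (h + 1) j =
      ∑' p : ℕ × (Fin r → ℕ),
        ENNReal.ofReal (fc j p) * ENNReal.ofReal ρ ^ p.1 * ∏ l : Fin r, τ h l ^ p.2 l)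
    (τs : Fin r → ℝ≥0∞) (hτs : ∀ j, τs j = ⨆ h : ℕ, τ h j)
    (hfin : ∀ j, τs j ≠ ⊤)
    (M : Fin r → Fin r → ℝ≥0∞)
    (hM : ∀ j l : Fin r, M j l =
      ∑' p : ℕ × (Fin r → ℕ),
        (p.2 l : ℝ≥0∞) * ENNReal.ofReal (fc j p) * ENNReal.ofReal ρ ^ p.1 *
          ∏ l' : Fin r, τs l' ^ (p.2 l' - if l' = l then 1 else 0))
    (hMfin : ∀ j l, M j l ≠ ⊤)
    (hspec : ∀ μ ∈ spectrum ℂ (Matrix.of fun j l : Fin r => (((M j l).toReal : ℝ) : ℂ)),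
      ‖μ‖ < 1) :
    ∃ C > (0 : ℝ), ∃ c > (0 : ℝ), ∀ h : ℕ, ∀ j : Fin r,
      τs j - τ h j ≤ ENNReal.ofReal (C * Real.exp (-c * h)) := by
  set a : Fin r → ℕ × (Fin r → ℕ) → ℝ≥0∞ := fun j p =>
    ENNReal.ofReal (fc j p) * ENNReal.ofReal ρ ^ p.1
  have hle : ∀ h, τ h ≤ τs := fun h j => hτs j ▸ le_iSup (fun h => τ h j) h
  -- Only the supersolution property `τs ≤ F(τs)` is needed; it avoids exchanging `⨆` with `∑'`.
  have hsuper : ∀ j, τs j ≤ ∑' p, a j p * ∏ l, τs l ^ p.2 l := by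
    intro j
    rw [hτs j]
    refine iSup_le fun h => ?_
    cases h with
    | zero => simp [hτ0]
    | succ h => exact (hτrec h j).trans_le (ENNReal.tsum_mul_prod_pow_mono _ _ (hle h))
  have hstep : ∀ h j, τs j - τ (h + 1) j ≤ ∑ l, M j l * (τs l - τ h l) := by
    intro h j
    have hM' : ∀ l, M j l = ∑' p, (p.2 l : ℝ≥0∞) * a j p *
        ∏ l', τs l' ^ (p.2 l' - if l' = l then 1 else 0) := fun l => by
      simp only [hM, a, mul_assoc]
    rw [tsub_le_iff_left, hτrec h j]
    simp only [hM']
    exact (hsuper j).trans (ENNReal.tsum_mul_prod_pow_le_add_sum _ _ (hle h))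
  exact ENNReal.exists_le_exp_of_le_sum_mul hMfin hspec
    (fun h j => ne_top_of_le_ne_top (hfin j) tsub_le_self) hstep

/-- Vectorial analogue of the critical height lemma (Section 5 of the paper):
for a system `y = F(z, y)` of `r` power series with nonnegative coefficients
and `F_j(0, y) = 0`, the vector iterates `τ₀ = 0`, `τ_{h+1} = F(ρ, τ_h)`
(computed coordinatewise in `[0,∞]`) converge geometrically to
`τ* = sup_h τ_h`, provided `τ*` is finite, each `F_j` converges at `(ρ, τ*)`,
the Jacobian matrix `M = (∂F_j/∂y_l)(ρ, τ*)` has finite entries, and the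
spectral radius of `M` is strictly less than `1` (expressed as: every
eigenvalue `μ ∈ spectrum ℂ M` satisfies `‖μ‖ < 1`). -/
theorem vector_critical_iteration_geometric_convergence
    (r : ℕ) (hr : 1 ≤ r) (ρ : ℝ) (hρ : 0 < ρ)
    (fc : Fin r → ℕ × (Fin r → ℕ) → ℝ)
    (hfc : ∀ j p, 0 ≤ fc j p)
    (hfc0 : ∀ j : Fin r, ∀ m : Fin r → ℕ, fc j (0, m) = 0)
    (τ : ℕ → Fin r → ℝ≥0∞) (hτ0 : ∀ j, τ 0 j = 0)
    (hτrec : ∀ h : ℕ, ∀ j : Fin r, τ (h + 1) j =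
      ∑' p : ℕ × (Fin r → ℕ),
        ENNReal.ofReal (fc j p) * ENNReal.ofReal ρ ^ p.1 * ∏ l : Fin r, τ h l ^ p.2 l)
    (τs : Fin r → ℝ≥0∞) (hτs : ∀ j, τs j = ⨆ h : ℕ, τ h j)
    (hfin : ∀ j, τs j ≠ ⊤)
    (hconv : ∀ j : Fin r,
      (∑' p : ℕ × (Fin r → ℕ),
        ENNReal.ofReal (fc j p) * ENNReal.ofReal ρ ^ p.1 * ∏ l : Fin r, τs l ^ p.2 l) ≠ ⊤)
    (M : Fin r → Fin r → ℝ≥0∞)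
    (hM : ∀ j l : Fin r, M j l =
      ∑' p : ℕ × (Fin r → ℕ),
        (p.2 l : ℝ≥0∞) * ENNReal.ofReal (fc j p) * ENNReal.ofReal ρ ^ p.1 *
          ∏ l' : Fin r, τs l' ^ (p.2 l' - if l' = l then 1 else 0))
    (hMfin : ∀ j l, M j l ≠ ⊤)
    (hspec : ∀ μ ∈ spectrum ℂ (Matrix.of fun j l : Fin r => (((M j l).toReal : ℝ) : ℂ)),
      ‖μ‖ < 1) :
    ∃ C > (0 : ℝ), ∃ c > (0 : ℝ), ∀ h : ℕ, ∀ j : Fin r,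
      τs j - τ h j ≤ ENNReal.ofReal (C * Real.exp (-c * h)) :=
  vector_critical_iteration_geometric_convergence_general r ρ fc τ hτ0 hτrec τs hτs hfin M hM hMfin
    hspec
end
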